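/- arXiv:1512.06946 — 2 statements merged into one kernel-verified Lean document; each statement's English description precedes it below -/
import Mathlib

section
/- Let K be a finite extension of Q_p and let f, g ∈ K[x] be monic irreducible separable polynomials of degree n with roots α (of f) and β (of g) in a fixed algebraic closure. Then |f(β)| = |g(α)|, where |·| is the absolute value extending that of K. Consequently, d(f,g) := |f(β)| is well-defined. -/
/-! With `|x| = p ^ (-v x / e)`, `S` gives an absolute value on `Ω` extending the `p`-adic one.
By uniqueness of such extensions it is the spectral norm over `ℚ_[p]`, hence invariant under
`Gal(Ω/K)`, so `|f(b)| = |f(β)|` for every root `b` of `g`, and `|g(a)| = |g(α)|` for every root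
`a` of `f`. Since `∏_b f(b)` and `∏_a g(a)` are both `±∏_{a,b} (a - b)`, this gives
`|f(β)|ⁿ = |g(α)|ⁿ`. -/

open Polynomial

/-- An additive valuation `v` (written additively, with `v 0 = ⊤`) on a field `Ω`,
extending the `p`-adic valuation of `ℚ_[p]` (scaled by the ramification index `e`),
taking integer values on an intermediate field `K` and normalized so that a
uniformizer `unif` of `K` has valuation `1`. -/
structure PadicSetup (p : ℕ) [Fact p.Prime] (K Ω : Type*) [Field K] [Field Ω]
    [Algebra ℚ_[p] K] [Algebra ℚ_[p] Ω] [Algebra K Ω] [IsScalarTower ℚ_[p] K Ω] where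
  v : Ω → WithTop ℚ
  v_top_iff : ∀ x : Ω, v x = ⊤ ↔ x = 0
  v_mul : ∀ x y : Ω, v (x * y) = v x + v y
  v_add : ∀ x y : Ω, min (v x) (v y) ≤ v (x + y)
  e : ℕ
  e_pos : 0 < e
  v_padic : ∀ x : ℚ_[p], x ≠ 0 →
    v (algebraMap ℚ_[p] Ω x) = (((e : ℤ) * x.valuation : ℤ) : ℚ)
  v_int : ∀ x : K, x ≠ 0 → ∃ m : ℤ, v (algebraMap K Ω x) = ((m : ℚ) : WithTop ℚ)
  unif : K
  v_unif : v (algebraMap K Ω unif) = 1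

variable {p : ℕ} [Fact p.Prime] {K Ω : Type*} [Field K] [Field Ω]
    [Algebra ℚ_[p] K] [Algebra ℚ_[p] Ω] [Algebra K Ω] [IsScalarTower ℚ_[p] K Ω]

/-- `f` is an Eisenstein polynomial of degree `n` over `K` (with respect to the
normalized valuation of `K`): monic of degree `n`, all lower coefficients have
valuation at least `1`, and the constant coefficient has valuation exactly `1`. -/
def PadicSetup.IsEisensteinOfDegree (S : PadicSetup p K Ω) (f : K[X]) (n : ℕ) : Prop :=
  f.Monic ∧ f.natDegree = n ∧ (∀ i < n, 1 ≤ S.v (algebraMap K Ω (f.coeff i))) ∧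
    S.v (algebraMap K Ω (f.coeff 0)) = 1

/-- The `i`-th coefficient of the ramification polynomial `ρ(x) = f(αx+α)/αⁿ` of `f`,
namely `ρ_i = ∑_{k=i}^n C(k,i) f_k α^{k-n}`. -/
noncomputable def PadicSetup.rho (S : PadicSetup p K Ω) (f : K[X]) (n : ℕ) (α : Ω)
    (i : ℕ) : Ω :=
  ∑ k ∈ Finset.Icc i n, (k.choose i : Ω) * algebraMap K Ω (f.coeff k) * α ^ ((k : ℤ) - (n : ℤ))

namespace WithTop

noncomputable def rpowNeg (b : ℝ) : WithTop ℚ → ℝ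
  | ⊤ => 0
  | (q : ℚ) => b ^ (-(q : ℝ))

variable {b : ℝ}

@[simp] lemma rpowNeg_top : rpowNeg b ⊤ = 0 := rfl

@[simp] lemma rpowNeg_coe (q : ℚ) : rpowNeg b q = b ^ (-(q : ℝ)) := rfl

lemma rpowNeg_nonneg (hb : 0 ≤ b) (w : WithTop ℚ) : 0 ≤ rpowNeg b w := by
  cases w <;> simp [Real.rpow_nonneg hb]

lemma rpowNeg_eq_zero_iff (hb : 0 < b) {w : WithTop ℚ} : rpowNeg b w = 0 ↔ w = ⊤ := by
  cases w <;> simp [(Real.rpow_pos_of_pos hb _).ne']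

lemma rpowNeg_add (hb : 0 < b) (w w' : WithTop ℚ) :
    rpowNeg b (w + w') = rpowNeg b w * rpowNeg b w' := by
  cases w <;> cases w' <;> simp [← WithTop.coe_add, Real.rpow_add hb, mul_comm]

lemma rpowNeg_strictAnti (hb : 1 < b) : StrictAnti (rpowNeg b) := by
  intro w w' h
  cases w' with
  | top =>
    obtain ⟨q, rfl⟩ := WithTop.ne_top_iff_exists.1 h.ne
    simpa using Real.rpow_pos_of_pos (zero_lt_one.trans hb) _
  | coe q' =>
    obtain ⟨q, rfl⟩ := WithTop.ne_top_iff_exists.1 (h.trans (WithTop.coe_lt_top q')).ne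
    exact Real.rpow_lt_rpow_of_exponent_lt hb (by simpa using WithTop.coe_lt_coe.1 h)

end WithTop

namespace AbsoluteValue

variable {R A : Type*} [CommRing R] [Field A] [Algebra R A]

lemma prod_map_aroots_aeval_comm (abv : AbsoluteValue A ℝ) {f g : R[X]}
    (hf : f.Monic) (hg : g.Monic) (hfs : (f.map (algebraMap R A)).Splits)
    (hgs : (g.map (algebraMap R A)).Splits) :
    ((g.aroots A).map fun b => abv (aeval b f)).prod =
      ((f.aroots A).map fun a => abv (aeval a g)).prod := by
  simp only [hfs.aeval_eq_prod_aroots_of_monic hf, hgs.aeval_eq_prod_aroots_of_monic hg,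
    map_multiset_prod, Multiset.map_map, Function.comp_def]
  rw [Multiset.prod_map_prod_map]
  simp only [abv.map_sub]

end AbsoluteValue

namespace PadicSetup

variable (S : PadicSetup p K Ω)

lemma one_lt_rpow_inv_e : 1 < (p : ℝ) ^ (S.e : ℝ)⁻¹ :=
  Real.one_lt_rpow (mod_cast (Fact.out : p.Prime).one_lt) (inv_pos.2 (mod_cast S.e_pos))

noncomputable def absVal : AbsoluteValue Ω ℝ where
  toFun x := WithTop.rpowNeg ((p : ℝ) ^ (S.e : ℝ)⁻¹) (S.v x)
  map_mul' x y := by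
    rw [S.v_mul, WithTop.rpowNeg_add (zero_lt_one.trans S.one_lt_rpow_inv_e)]
  nonneg' x := WithTop.rpowNeg_nonneg (by positivity) _
  eq_zero' x := by
    rw [WithTop.rpowNeg_eq_zero_iff (zero_lt_one.trans S.one_lt_rpow_inv_e), S.v_top_iff]
  add_le' x y := by
    have hanti := (WithTop.rpowNeg_strictAnti S.one_lt_rpow_inv_e).antitone
    calc _ ≤ WithTop.rpowNeg _ (min (S.v x) (S.v y)) := hanti (S.v_add x y)
      _ = _ := hanti.map_min
      _ ≤ _ := max_le_add_of_nonneg (WithTop.rpowNeg_nonneg (by positivity) _)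
          (WithTop.rpowNeg_nonneg (by positivity) _)

variable {S}

lemma v_eq_of_absVal_eq {x y : Ω} (h : S.absVal x = S.absVal y) : S.v x = S.v y :=
  (WithTop.rpowNeg_strictAnti S.one_lt_rpow_inv_e).injective h

lemma absVal_algebraMap (c : ℚ_[p]) : S.absVal (algebraMap ℚ_[p] Ω c) = ‖c‖ := by
  rcases eq_or_ne c 0 with rfl | hc
  · simp
  change WithTop.rpowNeg _ _ = _
  rw [S.v_padic c hc, WithTop.rpowNeg_coe, Padic.norm_eq_zpow_neg_valuation hc,
    ← Real.rpow_mul (by positivity), ← Real.rpow_intCast]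
  have he : (S.e : ℝ) ≠ 0 := mod_cast S.e_pos.ne'
  congr 1
  push_cast
  field_simp

variable [Algebra.IsAlgebraic ℚ_[p] Ω]

lemma absVal_eq_spectralNorm (x : Ω) : S.absVal x = spectralNorm ℚ_[p] Ω x :=
  spectralNorm_unique_field_norm_ext absVal_algebraMap x

lemma absVal_algEquiv (σ : Ω ≃ₐ[K] Ω) (x : Ω) : S.absVal (σ x) = S.absVal x := by
  rw [absVal_eq_spectralNorm, absVal_eq_spectralNorm]
  exact (spectralNorm_eq_of_equiv (σ.restrictScalars ℚ_[p]) x).symm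

lemma absVal_aeval_eq_of_minpoly_eq [Normal K Ω] {a b : Ω} (h : minpoly K a = minpoly K b)
    (f : K[X]) : S.absVal (aeval a f) = S.absVal (aeval b f) := by
  obtain ⟨σ, rfl⟩ := (Normal.minpoly_eq_iff_mem_orbit Ω).1 h
  exact (congrArg S.absVal (aeval_algHom_apply σ b f)).trans (absVal_algEquiv σ _)

lemma prod_map_aroots_absVal_aeval [Normal K Ω] {g : K[X]} (hg : Irreducible g)
    (hgm : g.Monic) {β : Ω} (hβ : aeval β g = 0) (f : K[X]) :
    ((g.aroots Ω).map fun b => S.absVal (aeval b f)).prod =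
      S.absVal (aeval β f) ^ g.natDegree := by
  have hgβ := minpoly.eq_of_irreducible_of_monic hg hβ hgm
  have hgsplit : (g.map (algebraMap K Ω)).Splits := hgβ ▸ Normal.splits' β
  have hconj : ∀ b ∈ g.aroots Ω, S.absVal (aeval b f) = S.absVal (aeval β f) := fun b hb =>
    absVal_aeval_eq_of_minpoly_eq (by
      rw [← minpoly.eq_of_irreducible_of_monic hg (mem_aroots.1 hb).2 hgm, ← hgβ]) f
  rw [Multiset.map_congr rfl hconj, Multiset.map_const', Multiset.prod_replicate,
    ← hgm.natDegree_map (algebraMap K Ω), hgsplit.natDegree_eq_card_roots]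

end PadicSetup

theorem dist_of_irreducible_polynomials_well_defined_general
    [FiniteDimensional ℚ_[p] K] [IsAlgClosed Ω] [Algebra.IsAlgebraic K Ω]
    (S : PadicSetup p K Ω)
    (f g : K[X]) (n : ℕ) (hn : 0 < n)
    (hfm : f.Monic) (hfd : f.natDegree = n) (hfirr : Irreducible f)
    (hgm : g.Monic) (hgd : g.natDegree = n) (hgirr : Irreducible g)
    (α β : Ω) (hα : aeval α f = 0) (hβ : aeval β g = 0) :
    S.v (aeval β f) = S.v (aeval α g) := by
  have : Algebra.IsAlgebraic ℚ_[p] Ω := .trans ℚ_[p] K Ω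
  have : IsAlgClosure K Ω := ⟨inferInstance, inferInstance⟩
  have hprod := S.absVal.prod_map_aroots_aeval_comm hfm hgm (IsAlgClosed.splits _)
    (IsAlgClosed.splits _)
  rw [S.prod_map_aroots_absVal_aeval hgirr hgm hβ, S.prod_map_aroots_absVal_aeval hfirr hfm hα,
    hfd, hgd] at hprod
  exact PadicSetup.v_eq_of_absVal_eq
    ((pow_left_inj₀ (by positivity) (by positivity) hn.ne').1 hprod)

/-- For monic irreducible separable polynomials `f, g` of degree `n`
over `K` with roots `α` of `f` and `β` of `g` in an algebraic closure `Ω` of `K`,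
one has `|f(β)| = |g(α)|`; additively, `v(f(β)) = v(g(α))`.  Hence
`d(f,g) := |f(β)|` is well-defined. -/
theorem dist_of_irreducible_polynomials_well_defined
    [FiniteDimensional ℚ_[p] K] [IsAlgClosed Ω] [Algebra.IsAlgebraic K Ω]
    (S : PadicSetup p K Ω)
    (f g : K[X]) (n : ℕ) (hn : 0 < n)
    (hfm : f.Monic) (hfd : f.natDegree = n) (hfirr : Irreducible f) (hfsep : f.Separable)
    (hgm : g.Monic) (hgd : g.natDegree = n) (hgirr : Irreducible g) (hgsep : g.Separable)
    (α β : Ω) (hα : aeval α f = 0) (hβ : aeval β g = 0) :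
    S.v (aeval β f) = S.v (aeval α g) :=
  dist_of_irreducible_polynomials_well_defined_general S f g n hn hfm hfd hfirr hgm hgd hgirr α β hα
    hβ
end

section
/- Let K be a finite extension of Q_p and let f, g ∈ K[x] be monic irreducible separable polynomials of degree n. Let α = α_1, ..., α_n be the roots of f, and let β be a root of g at minimal distance to α, i.e., |β − α| ≤ |β' − α| for all roots β' of g. Then |g(α)| = ∏_{i=1}^n max( |β − α|, |α − α_i| ). -/
open Polynomial

variable {p : ℕ} [Fact p.Prime] {K Ω : Type*} [Field K] [Field Ω]
    [Algebra ℚ_[p] K] [Algebra ℚ_[p] Ω] [Algebra K Ω] [IsScalarTower ℚ_[p] K Ω]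

/-!
Galois invariance of `v`: `x ↦ p ^ (-v x / e)` is a multiplicative `ℚ_[p]`-algebra norm on
the algebraic extension `Ω`, so by uniqueness of such norms it is the spectral norm, which
depends on `x` only through its minimal polynomial. Hence `v (g a)` takes the same value at
all `n` roots `a` of `f`, and summing `v (g a) = ∑_b v (a - b)` over them and comparing with
the symmetric sum for `f` at the roots `b` of `g` gives `v (g α) = v (f β) = ∑_a v (β - a)`.
Finally, an automorphism moving `a` to `α` moves `β` to another root of `g`, so
`v (β - a) ≤ v (β - α)` by the choice of `β`, and the ultrametric inequality then forces
`v (β - a) = min (v (β - α)) (v (α - a))`.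
-/

noncomputable def rpowNeg (b : ℝ) (t : WithTop ℚ) : ℝ :=
  (t.map fun q : ℚ => b ^ (-(q : ℝ))).untopD 0

@[simp]
theorem rpowNeg_top (b : ℝ) : rpowNeg b ⊤ = 0 := rfl

@[simp]
theorem rpowNeg_coe (b : ℝ) (q : ℚ) : rpowNeg b q = b ^ (-(q : ℝ)) := rfl

theorem rpowNeg_add {b : ℝ} (hb : 0 < b) (s t : WithTop ℚ) :
    rpowNeg b (s + t) = rpowNeg b s * rpowNeg b t := by
  induction s using WithTop.recTopCoe <;> induction t using WithTop.recTopCoe <;>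
    simp [← WithTop.coe_add, Real.rpow_add hb, mul_comm]

theorem rpowNeg_strictAnti {b : ℝ} (hb : 1 < b) : StrictAnti (rpowNeg b) := by
  intro s t hst
  lift s to ℚ using hst.ne_top
  induction t using WithTop.recTopCoe with
  | top => simpa using Real.rpow_pos_of_pos (zero_lt_one.trans hb) _
  | coe r =>
    simp only [rpowNeg_coe]
    exact Real.rpow_lt_rpow_of_exponent_lt hb
      (by exact_mod_cast neg_lt_neg (WithTop.coe_lt_coe.mp hst))

theorem rpowNeg_eq_zero_iff {b : ℝ} (hb : 0 < b) {t : WithTop ℚ} : rpowNeg b t = 0 ↔ t = ⊤ := by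
  induction t using WithTop.recTopCoe <;> simp [(Real.rpow_pos_of_pos hb _).ne']

theorem rpowNeg_nonneg {b : ℝ} (hb : 0 < b) (t : WithTop ℚ) : 0 ≤ rpowNeg b t := by
  induction t using WithTop.recTopCoe <;> simp [(Real.rpow_pos_of_pos hb _).le]

theorem WithTop.nsmul_strictMono {α : Type*} [AddCommMonoid α] [LinearOrder α]
    [IsOrderedCancelAddMonoid α] {n : ℕ} (hn : n ≠ 0) : StrictMono fun t : WithTop α => n • t := by
  intro s t hst
  lift s to α using hst.ne_top
  induction t using WithTop.recTopCoe with
  | top =>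
    obtain ⟨m, rfl⟩ := Nat.exists_eq_succ_of_ne_zero hn
    simp [← WithTop.coe_nsmul, succ_nsmul]
  | coe r =>
    simp only [← WithTop.coe_nsmul, WithTop.coe_lt_coe] at hst ⊢
    exact nsmul_right_strictMono hn hst

section Conjugates

variable {F L : Type*} [Field F] [Field L] [Algebra F L] [IsAlgClosed L] [Algebra.IsAlgebraic F L]

theorem exists_algEquiv_apply_eq_of_mem_aroots {f : F[X]} (hf : Irreducible f) {x y : L}
    (hx : aeval x f = 0) (hy : y ∈ f.aroots L) : ∃ σ : L ≃ₐ[F] L, σ y = x := by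
  have : IsAlgClosure F L := ⟨‹_›, ‹_›⟩
  refine minpoly.exists_algEquiv_of_root (Algebra.IsAlgebraic.isAlgebraic x) ?_
  rw [← minpoly.eq_of_irreducible hf hx, map_mul, (mem_aroots.1 hy).2, zero_mul]

theorem sum_map_aroots_eq_nsmul {M : Type*} [AddCommMonoid M] {w : L → M}
    (hw : ∀ (σ : L ≃ₐ[F] L) (y : L), w (σ y) = w y) {f : F[X]} (hf : Irreducible f) {x : L}
    (hx : aeval x f = 0) : ((f.aroots L).map w).sum = f.natDegree • w x := by
  have hconj : ∀ y ∈ f.aroots L, w y = w x := fun y hy => by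
    obtain ⟨σ, rfl⟩ := exists_algEquiv_apply_eq_of_mem_aroots hf hx hy
    exact (hw σ y).symm
  rw [Multiset.map_congr rfl hconj, Multiset.map_const', Multiset.sum_replicate,
    IsAlgClosed.card_aroots_eq_natDegree]

end Conjugates

namespace PadicSetup

variable (S : PadicSetup p K Ω)

@[simp]
theorem v_zero : S.v 0 = ⊤ := (S.v_top_iff 0).2 rfl

@[simp]
theorem v_one : S.v 1 = 0 := by
  simpa using S.v_padic 1 one_ne_zero

def addValuation : AddValuation Ω (WithTop ℚ) :=
  AddValuation.of S.v S.v_zero S.v_one S.v_add S.v_mul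

theorem v_neg (x : Ω) : S.v (-x) = S.v x := S.addValuation.map_neg x

theorem v_sub_comm (x y : Ω) : S.v (x - y) = S.v (y - x) := S.addValuation.map_sub_swap x y

theorem v_multiset_prod (m : Multiset Ω) : S.v m.prod = (m.map S.v).sum := by
  induction m using Multiset.induction with
  | empty => simp
  | cons a m ih => simp [S.v_mul, ih]

theorem v_sub_eq_min_of_le {a α β : Ω} (h : S.v (β - a) ≤ S.v (β - α)) :
    S.v (β - a) = min (S.v (β - α)) (S.v (α - a)) := by
  have hβa := S.v_add (β - α) (α - a)
  have hαa := S.v_add (β - a) (α - β)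
  rw [sub_add_sub_cancel] at hβa
  rw [sub_add_sub_cancel', S.v_sub_comm α β, min_eq_left h] at hαa
  exact le_antisymm (le_min h hαa) hβa

noncomputable def base : ℝ := (p : ℝ) ^ (S.e : ℝ)⁻¹

theorem one_lt_base : 1 < S.base :=
  Real.one_lt_rpow (by exact_mod_cast (Fact.out : p.Prime).one_lt) (by simpa using S.e_pos)

theorem rpowNeg_v_algebraMap (c : ℚ_[p]) :
    rpowNeg S.base (S.v (algebraMap ℚ_[p] Ω c)) = ‖c‖ := by
  rcases eq_or_ne c 0 with rfl | hc
  · simp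
  rw [S.v_padic c hc, Padic.norm_eq_zpow_neg_valuation hc, base, rpowNeg_coe,
    ← Real.rpow_mul (Nat.cast_nonneg p), ← Real.rpow_intCast]
  congr 1
  have : (S.e : ℝ) ≠ 0 := by exact_mod_cast S.e_pos.ne'
  push_cast
  field_simp

noncomputable def mulAlgebraNorm : MulAlgebraNorm ℚ_[p] Ω where
  toFun x := rpowNeg S.base (S.v x)
  map_zero' := by simp
  add_le' x y := by
    have hb := zero_lt_one.trans S.one_lt_base
    calc rpowNeg S.base (S.v (x + y)) ≤ rpowNeg S.base (min (S.v x) (S.v y)) :=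
          (rpowNeg_strictAnti S.one_lt_base).antitone (S.v_add x y)
      _ = max (rpowNeg S.base (S.v x)) (rpowNeg S.base (S.v y)) :=
          (rpowNeg_strictAnti S.one_lt_base).antitone.map_min
      _ ≤ _ := max_le_add_of_nonneg (rpowNeg_nonneg hb _) (rpowNeg_nonneg hb _)
  neg' x := by simp only [S.v_neg]
  eq_zero_of_map_eq_zero' x h :=
    (S.v_top_iff x).1 ((rpowNeg_eq_zero_iff (zero_lt_one.trans S.one_lt_base)).1 h)
  smul' c x := by
    simp only [Algebra.smul_def, S.v_mul, rpowNeg_add (zero_lt_one.trans S.one_lt_base),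
      S.rpowNeg_v_algebraMap]
  map_one' := by simpa using rpowNeg_coe S.base 0
  map_mul' x y := by simp [S.v_mul, rpowNeg_add (zero_lt_one.trans S.one_lt_base)]

theorem mulAlgebraNorm_apply (x : Ω) : S.mulAlgebraNorm x = rpowNeg S.base (S.v x) := rfl

theorem mulAlgebraNorm_eq_spectralNorm [Algebra.IsAlgebraic ℚ_[p] Ω] (x : Ω) :
    S.mulAlgebraNorm x = spectralNorm ℚ_[p] Ω x :=
  DFunLike.congr_fun (spectralNorm_unique (f := S.mulAlgebraNorm.toAlgebraNorm)
    fun y n _ => map_pow S.mulAlgebraNorm y n) x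

theorem v_algEquiv [Algebra.IsAlgebraic ℚ_[p] Ω] (σ : Ω ≃ₐ[ℚ_[p]] Ω) (x : Ω) :
    S.v (σ x) = S.v x := by
  apply (rpowNeg_strictAnti S.one_lt_base).injective
  simp only [← mulAlgebraNorm_apply, mulAlgebraNorm_eq_spectralNorm, spectralNorm,
    minpoly.algEquiv_eq]


theorem v_aeval_of_monic [IsAlgClosed Ω] {f : K[X]} (hf : f.Monic) (x : Ω) :
    S.v (aeval x f) = ((f.aroots Ω).map fun a => S.v (x - a)).sum := by
  rw [(IsAlgClosed.splits _).aeval_eq_prod_aroots_of_monic hf, S.v_multiset_prod, Multiset.map_map]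
  rfl

theorem sum_v_aeval_comm [IsAlgClosed Ω] {f g : K[X]} (hf : f.Monic) (hg : g.Monic) :
    ((f.aroots Ω).map fun a => S.v (aeval a g)).sum =
      ((g.aroots Ω).map fun b => S.v (aeval b f)).sum := by
  simp only [S.v_aeval_of_monic hf, S.v_aeval_of_monic hg]
  rw [Multiset.sum_map_sum_map]
  simp only [S.v_sub_comm]

theorem v_aeval_algEquiv [Algebra.IsAlgebraic ℚ_[p] Ω] (σ : Ω ≃ₐ[K] Ω) (f : K[X]) (x : Ω) :
    S.v (aeval (σ x) f) = S.v (aeval x f) := by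
  rw [aeval_algHom_apply σ]
  exact S.v_algEquiv (σ.restrictScalars ℚ_[p]) _

theorem v_aeval_eq_v_aeval [IsAlgClosed Ω] [Algebra.IsAlgebraic K Ω]
    [Algebra.IsAlgebraic ℚ_[p] Ω] {f g : K[X]} (hfm : f.Monic) (hgm : g.Monic)
    (hfirr : Irreducible f) (hgirr : Irreducible g) (hdeg : f.natDegree = g.natDegree)
    {α β : Ω} (hα : aeval α f = 0) (hβ : aeval β g = 0) :
    S.v (aeval α g) = S.v (aeval β f) := by
  refine (WithTop.nsmul_strictMono hfirr.natDegree_pos.ne').injective ?_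
  have hsum_f := sum_map_aroots_eq_nsmul (w := fun a => S.v (aeval a g))
    (S.v_aeval_algEquiv · g) hfirr hα
  have hsum_g := sum_map_aroots_eq_nsmul (w := fun b => S.v (aeval b f))
    (S.v_aeval_algEquiv · f) hgirr hβ
  rw [← hsum_f, S.sum_v_aeval_comm hfm hgm, hsum_g, hdeg]

theorem v_sub_le_of_mem_aroots [IsAlgClosed Ω] [Algebra.IsAlgebraic K Ω]
    [Algebra.IsAlgebraic ℚ_[p] Ω] {f g : K[X]} (hf : Irreducible f) (hg : g ≠ 0) {α β a : Ω}
    (hα : aeval α f = 0) (hβ : aeval β g = 0)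
    (hclosest : ∀ β' ∈ g.aroots Ω, S.v (β' - α) ≤ S.v (β - α)) (ha : a ∈ f.aroots Ω) :
    S.v (β - a) ≤ S.v (β - α) := by
  obtain ⟨σ, rfl⟩ := exists_algEquiv_apply_eq_of_mem_aroots hf hα ha
  have hσβ : σ β ∈ g.aroots Ω := by
    rw [mem_aroots, aeval_algHom_apply σ, hβ, map_zero]
    exact ⟨hg, rfl⟩
  calc S.v (β - a) = S.v (σ β - σ a) := by
        rw [← map_sub]; exact (S.v_algEquiv (σ.restrictScalars ℚ_[p]) _).symm
    _ ≤ S.v (β - σ a) := hclosest _ hσβ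

end PadicSetup

theorem dist_eq_prod_max_over_roots_general
    [FiniteDimensional ℚ_[p] K] [IsAlgClosed Ω] [Algebra.IsAlgebraic K Ω]
    (S : PadicSetup p K Ω)
    (f g : K[X]) (n : ℕ)
    (hfm : f.Monic) (hfd : f.natDegree = n) (hfirr : Irreducible f)
    (hgm : g.Monic) (hgd : g.natDegree = n) (hgirr : Irreducible g)
    (α β : Ω) (hα : aeval α f = 0) (hβ : aeval β g = 0)
    (hclosest : ∀ β' ∈ (g.map (algebraMap K Ω)).roots, S.v (β' - α) ≤ S.v (β - α)) :
    S.v (aeval α g) =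
      ((f.map (algebraMap K Ω)).roots.map
        (fun a => min (S.v (β - α)) (S.v (α - a)))).sum := by
  have : Algebra.IsAlgebraic ℚ_[p] Ω := .trans ℚ_[p] K Ω
  rw [S.v_aeval_eq_v_aeval hfm hgm hfirr hgirr (hfd.trans hgd.symm) hα hβ,
    S.v_aeval_of_monic hfm β]
  exact congrArg Multiset.sum <| Multiset.map_congr rfl fun a ha =>
    S.v_sub_eq_min_of_le (S.v_sub_le_of_mem_aroots hfirr hgm.ne_zero hα hβ hclosest ha)

/-- For monic irreducible separable `f, g` of degree `n` over `K`,
`α` a root of `f`, and `β` a root of `g` closest to `α` (i.e. of maximal valuation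
`v(β - α)` among the roots of `g`), one has
`|g(α)| = ∏_{i=1}^n max(|β - α|, |α - α_i|)` over the roots `α_i` of `f`;
additively, `v(g(α)) = ∑_i min( v(β - α), v(α - α_i) )`. -/
theorem dist_eq_prod_max_over_roots
    [FiniteDimensional ℚ_[p] K] [IsAlgClosed Ω] [Algebra.IsAlgebraic K Ω]
    (S : PadicSetup p K Ω)
    (f g : K[X]) (n : ℕ) (hn : 0 < n)
    (hfm : f.Monic) (hfd : f.natDegree = n) (hfirr : Irreducible f) (hfsep : f.Separable)
    (hgm : g.Monic) (hgd : g.natDegree = n) (hgirr : Irreducible g) (hgsep : g.Separable)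
    (α β : Ω) (hα : aeval α f = 0) (hβ : aeval β g = 0)
    (hclosest : ∀ β' ∈ (g.map (algebraMap K Ω)).roots, S.v (β' - α) ≤ S.v (β - α)) :
    S.v (aeval α g) =
      ((f.map (algebraMap K Ω)).roots.map
        (fun a => min (S.v (β - α)) (S.v (α - a)))).sum :=
  dist_eq_prod_max_over_roots_general S f g n hfm hfd hfirr hgm hgd hgirr α β hα hβ hclosest
end
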